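/- arXiv:2308.02762 — 5 statements merged into one kernel-verified Lean document; each statement's English description precedes it below -/
import Mathlib

section
/- Let (X_t) be a Markov chain and μ: Ω → [0,1] with E[μ(X_{t+1}) | X_t] ≥ μ(X_t). Suppose that with probability at least ν_t the event E_t = {μ(X_{t+1}) < μ(X_t)} occurs, and that on E_t one has |μ(X_{t+1}) − μ(X_t)| ≥ ℓ_t. Then Var[μ(X_{t+1}) | X_t] ≥ (ν_t · ℓ_t)² for all t with X_t not an absorbing state. -/
/-- **Naive variance lower bound (submartingale case).**
For a Markov chain with transition matrix `P` on a finite state space and a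
submartingale potential `μ : S → [0,1]`, if from a non-absorbing state `s`
(`μ s ∉ {0,1}`) a strict decrease of `μ` happens with probability at least `ν`
and every possible decrease has magnitude at least `ℓ`, then
`Var[μ(X_{t+1}) | X_t = s] ≥ (ν·ℓ)²`. -/
theorem variance_lower_bound
    {S : Type*} [Fintype S] (P : S → S → ℝ)
    (hP0 : ∀ s t, 0 ≤ P s t) (hP1 : ∀ s, ∑ t, P s t = 1)
    (μ : S → ℝ) (hμ : ∀ s, μ s ∈ Set.Icc (0 : ℝ) 1)
    (hsub : ∀ s, μ s ≤ ∑ t, P s t * μ t)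
    (s : S) (hs0 : μ s ≠ 0) (hs1 : μ s ≠ 1)
    (ν ℓ : ℝ) (hν : 0 < ν) (hℓ : 0 < ℓ)
    (hprob : ν ≤ ∑ t, if μ t < μ s then P s t else 0)
    (hjump : ∀ t, 0 < P s t → μ t < μ s → ℓ ≤ |μ t - μ s|) :
    (ν * ℓ) ^ 2 ≤ ∑ t, P s t * (μ t - ∑ t', P s t' * μ t') ^ 2 := by
  set m : ℝ := ∑ t', P s t' * μ t' with hm_def
  have hm : μ s ≤ m := hsub s
  -- ν ≤ 1
  have hν1 : ν ≤ 1 := by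
    refine hprob.trans ?_
    calc (∑ t, if μ t < μ s then P s t else 0) ≤ ∑ t, P s t := by
          apply Finset.sum_le_sum
          intro t _
          split <;> [exact le_rfl; exact hP0 s t]
      _ = 1 := hP1 s
  -- ℓ ≤ 1
  have hℓ1 : ℓ ≤ 1 := by
    have hpos : 0 < ∑ t, if μ t < μ s then P s t else 0 := lt_of_lt_of_le hν hprob
    obtain ⟨t, _, ht⟩ := Finset.exists_lt_of_sum_lt
      (show ∑ _t : S, (0:ℝ) < ∑ t, if μ t < μ s then P s t else 0 by simpa using hpos)
    have ht' : (0 : ℝ) < if μ t < μ s then P s t else 0 := ht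
    by_cases h : μ t < μ s
    · simp only [h, if_true] at ht'
      have := hjump t ht' h
      have h1 : |μ t - μ s| ≤ 1 := by
        rw [abs_le]
        constructor <;> nlinarith [(hμ t).1, (hμ t).2, (hμ s).1, (hμ s).2]
      linarith
    · simp [h] at ht'
  -- key chain
  have key : ν * ℓ ^ 2 ≤ ∑ t, P s t * (μ t - m) ^ 2 := by
    calc ν * ℓ ^ 2 ≤ (∑ t, if μ t < μ s then P s t else 0) * ℓ ^ 2 :=
          mul_le_mul_of_nonneg_right hprob (sq_nonneg ℓ)
      _ = ∑ t, (if μ t < μ s then P s t else 0) * ℓ ^ 2 := by rw [Finset.sum_mul]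
      _ ≤ ∑ t, P s t * (μ t - m) ^ 2 := by
          apply Finset.sum_le_sum
          intro t _
          by_cases h : μ t < μ s
          · simp only [h, if_true]
            rcases eq_or_lt_of_le (hP0 s t) with hp | hp
            · rw [← hp]; ring_nf; exact le_rfl
            · apply mul_le_mul_of_nonneg_left _ (hP0 s t)
              have hj := hjump t hp h
              rw [abs_of_neg (by linarith)] at hj
              have : ℓ ≤ m - μ t := by linarith
              nlinarith
          · simp only [h, if_false, zero_mul]
            exact mul_nonneg (hP0 s t) (sq_nonneg _)
  have : (ν * ℓ) ^ 2 ≤ ν * ℓ ^ 2 := by nlinarith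
  linarith
end

section
/- If p↑ ≥ (r/W)·(1/(N−1)) and p↓ ≤ (N−k)/W with W = N + (r−1)k, N < W < rN, 1 ≤ k ≤ N−1, and r ≥ N² (N ≥ 2), then (p↑ − p↓)/N ≥ 1/N⁴. -/
/-- **Arithmetic core of the strong-selection drift bound.**
If `p↑ ≥ (r/W)·(1/(N−1))`, `p↓ ≤ (N−k)/W`, `W = N + (r−1)k`, `N < W < rN`,
`1 ≤ k ≤ N−1`, `N ≥ 2`, and `r ≥ N²`, then `(p↑ − p↓)/N ≥ 1/N⁴`. -/
theorem drift_arithmetic_core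
    (N k : ℕ) (hN : 2 ≤ N) (hk1 : 1 ≤ k) (hk2 : k ≤ N - 1)
    (r W pup pdown : ℝ)
    (hr : (N : ℝ) ^ 2 ≤ r)
    (hW : W = (N : ℝ) + (r - 1) * (k : ℝ))
    (hW1 : (N : ℝ) < W) (hW2 : W < r * (N : ℝ))
    (hup : r / W * (1 / ((N : ℝ) - 1)) ≤ pup)
    (hdown : pdown ≤ ((N : ℝ) - (k : ℝ)) / W) :
    1 / (N : ℝ) ^ 4 ≤ (pup - pdown) / (N : ℝ) := by
  set n : ℝ := (N : ℝ) with hn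
  have hn2 : (2:ℝ) ≤ n := by show (2:ℝ) ≤ (N:ℝ); exact_mod_cast hN
  have hk1' : (1:ℝ) ≤ (k:ℝ) := by exact_mod_cast hk1
  have hkn : (k:ℝ) ≤ n - 1 := by
    have : ((k:ℝ)) ≤ ((N - 1 : ℕ) : ℝ) := by exact_mod_cast hk2
    rwa [Nat.cast_sub (by omega), Nat.cast_one] at this
  have hW0 : (0:ℝ) < W := lt_trans (by linarith) hW1
  have hn1 : (0:ℝ) < n - 1 := by linarith
  have hr0 : (0:ℝ) < r := by nlinarith
  -- lower bound for the difference
  have h1 : r / (W * (n - 1)) - (n - 1) / W ≤ pup - pdown := by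
    have hA : r / (W * (n - 1)) = r / W * (1 / (n - 1)) := by
      field_simp
    have hB : (n - (k:ℝ)) / W ≤ (n - 1) / W := by
      gcongr
    linarith [hA ▸ hup, le_trans hdown hB]
  have h2 : r / (W * (n - 1)) - (n - 1) / W = (r - (n-1)^2) / (W * (n - 1)) := by
    field_simp
  have hnum : (0:ℝ) ≤ r - (n-1)^2 := by nlinarith
  have h3 : (r - (n-1)^2) / (r * n * (n - 1)) ≤ (r - (n-1)^2) / (W * (n - 1)) := by
    apply div_le_div_of_nonneg_left hnum (by positivity)
    have : W * (n - 1) ≤ r * n * (n - 1) := by nlinarith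
    linarith [this]
  have h4 : 1 / n ^ 3 ≤ (r - (n-1)^2) / (r * n * (n - 1)) := by
    rw [div_le_div_iff₀ (by positivity) (by positivity)]
    have h0 : (0:ℝ) ≤ n * (n^2 - n + 1) := by nlinarith
    nlinarith [mul_nonneg (sub_nonneg.2 hr) h0, sq_nonneg n]
  have h5 : 1 / n ^ 3 ≤ pup - pdown := by
    calc 1 / n ^ 3 ≤ (r - (n-1)^2) / (r * n * (n - 1)) := h4
    _ ≤ (r - (n-1)^2) / (W * (n - 1)) := h3
    _ = r / (W * (n - 1)) - (n - 1) / W := h2.symm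
    _ ≤ pup - pdown := h1
  have hEq : (1:ℝ)/n^4 = (1/n^3)/n := by
    rw [div_div]; ring_nf
  rw [hEq, div_le_div_iff₀ (by positivity) (by positivity)]
  nlinarith [h5]
end

section
/- In the Moran Birth-death process on an Eulerian directed graph G (indegree equals outdegree at every vertex) with maximum degree Δ and minimum degree δ, if r ≥ Δ/δ then for every nonempty proper mutant set S, E[φ(X_{t+1}) − φ(X_t) | X_t = S] ≥ 0, where φ(S) = |S|/N. -/
open Finset

/-- **Nonnegative drift on Eulerian graphs for `r ≥ Δ/δ`.**
In the Moran Birth-death process on a strongly connected Eulerian directed graph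
(indegree = outdegree at every vertex) whose degrees lie in `[δ, Δ]`, if the
mutant fitness satisfies `r ≥ Δ/δ` then for every nonempty proper mutant set `S`
the expected one-step change of the mutant fraction `φ(S) = |S|/N`, which equals
`(1/(W·N))·(r·Σ_{(v,w)∈E, v∈S, w∉S} 1/deg(v) − Σ_{(u,v)∈E, u∉S, v∈S} 1/deg(u))`
with total fitness `W = N + (r−1)|S|`, is nonnegative. -/
theorem eulerian_nonnegative_drift
    {V : Type*} [Fintype V] [DecidableEq V]
    (Adj : V → V → Prop) [DecidableRel Adj]
    (hirr : ∀ v, ¬ Adj v v)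
    (hconn : ∀ u v : V, u ≠ v → Relation.TransGen Adj u v)
    (indeg outdeg : V → ℕ)
    (hindeg : ∀ v, indeg v = (univ.filter (fun u => Adj u v)).card)
    (houtdeg : ∀ v, outdeg v = (univ.filter (fun w => Adj v w)).card)
    (heuler : ∀ v, indeg v = outdeg v)
    (δ Δ : ℕ) (hδpos : 0 < δ)
    (hδ : ∀ v, δ ≤ outdeg v) (hΔ : ∀ v, outdeg v ≤ Δ)
    (r : ℝ) (hr : (Δ : ℝ) / (δ : ℝ) ≤ r)
    (N : ℕ) (hN : N = Fintype.card V)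
    (S : Finset V) (hS1 : S.Nonempty) (hS2 : S ≠ Finset.univ)
    (W : ℝ) (hW : W = N + (r - 1) * S.card)
    (drift : ℝ)
    (hdrift : drift =
      (1 / (W * N)) *
        (r * (∑ u ∈ S, ∑ v ∈ univ.filter (fun v => Adj u v ∧ v ∉ S), 1 / (outdeg u : ℝ)) -
          (∑ u ∈ univ.filter (fun u => u ∉ S),
            ∑ v ∈ univ.filter (fun v => Adj u v ∧ v ∈ S), 1 / (outdeg u : ℝ)))) :
    0 ≤ drift := by
  classical
  obtain ⟨v0, hv0⟩ := hS1
  have hNpos : 0 < N := by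
    rw [hN]; exact Fintype.card_pos_iff.mpr ⟨v0⟩
  have hδΔ : δ ≤ Δ := le_trans (hδ v0) (hΔ v0)
  have hΔpos : 0 < Δ := lt_of_lt_of_le hδpos hδΔ
  have hδR : (0:ℝ) < δ := by exact_mod_cast hδpos
  have hΔR : (0:ℝ) < Δ := by exact_mod_cast hΔpos
  have hr1 : (1:ℝ) ≤ r := le_trans ((one_le_div hδR).mpr (by exact_mod_cast hδΔ)) hr
  have hr0 : (0:ℝ) ≤ r := le_trans zero_le_one hr1
  have hWpos : 0 < W := by
    rw [hW]
    have h1 : (0:ℝ) ≤ (r - 1) * S.card := mul_nonneg (by linarith) (by positivity)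
    have h2 : (0:ℝ) < N := by exact_mod_cast hNpos
    linarith
  -- cut edge counts
  set cout : V → ℕ := fun u => (univ.filter (fun v => Adj u v ∧ v ∉ S)).card with hcout
  set cin : V → ℕ := fun u => (univ.filter (fun v => Adj u v ∧ v ∈ S)).card with hcin
  -- Eulerian cut property
  have hsplit : ∀ u, outdeg u = cin u + cout u := by
    intro u
    rw [houtdeg, hcout, hcin]
    simp only
    rw [← Finset.filter_filter, ← Finset.filter_filter]
    exact (Finset.card_filter_add_card_filter_not (fun v => v ∈ S)).symm
  have hswap : ∑ v ∈ S, indeg v = ∑ u ∈ univ, cin u := by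
    simp only [hindeg, hcin, Finset.card_filter]
    rw [Finset.sum_comm]
    refine Finset.sum_congr rfl fun u _ => ?_
    have h : (∑ i : V, if Adj u i ∧ i ∈ S then (1:ℕ) else 0)
        = ∑ i ∈ univ.filter (fun i => i ∈ S), (if Adj u i then 1 else 0) := by
      rw [Finset.sum_filter]
      exact Finset.sum_congr rfl fun v _ => by
        by_cases h1 : Adj u v <;> by_cases h2 : v ∈ S <;> simp [h1, h2]
    rw [h, Finset.filter_mem_eq_inter, Finset.univ_inter]
  have huniv : ∑ u ∈ univ, cin u = ∑ u ∈ S, cin u + ∑ u ∈ univ.filter (fun u => u ∉ S), cin u := by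
    rw [← Finset.sum_filter_add_sum_filter_not univ (fun u => u ∈ S) cin]
    congr 1
    · congr 1; ext u; simp
  have hdeg : ∑ v ∈ S, indeg v = ∑ u ∈ S, cin u + ∑ u ∈ S, cout u := by
    rw [← Finset.sum_add_distrib]
    exact Finset.sum_congr rfl fun v _ => by rw [heuler, hsplit]
  have key : ∑ u ∈ S, cout u = ∑ u ∈ univ.filter (fun u => u ∉ S), cin u := by
    omega
  -- real-valued bounds
  have hX : (∑ u ∈ S, ∑ v ∈ univ.filter (fun v => Adj u v ∧ v ∉ S), 1 / (outdeg u : ℝ))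
      = ∑ u ∈ S, (cout u : ℝ) / (outdeg u : ℝ) := by
    refine Finset.sum_congr rfl fun u _ => ?_
    rw [Finset.sum_const, nsmul_eq_mul]
    rw [hcout]; ring
  have hY : (∑ u ∈ univ.filter (fun u => u ∉ S), ∑ v ∈ univ.filter (fun v => Adj u v ∧ v ∈ S), 1 / (outdeg u : ℝ))
      = ∑ u ∈ univ.filter (fun u => u ∉ S), (cin u : ℝ) / (outdeg u : ℝ) := by
    refine Finset.sum_congr rfl fun u _ => ?_
    rw [Finset.sum_const, nsmul_eq_mul]
    rw [hcin]; ring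
  have hdegpos : ∀ u : V, (0:ℝ) < (outdeg u : ℝ) := fun u => by
    exact_mod_cast lt_of_lt_of_le hδpos (hδ u)
  have hXlb : (∑ u ∈ S, (cout u : ℝ) / (Δ : ℝ)) ≤ ∑ u ∈ S, (cout u : ℝ) / (outdeg u : ℝ) := by
    refine Finset.sum_le_sum fun u _ => ?_
    exact div_le_div_of_nonneg_left (by positivity) (hdegpos u) (by exact_mod_cast hΔ u)
  have hYub : (∑ u ∈ univ.filter (fun u => u ∉ S), (cin u : ℝ) / (outdeg u : ℝ))
      ≤ ∑ u ∈ univ.filter (fun u => u ∉ S), (cin u : ℝ) / (δ : ℝ) := by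
    refine Finset.sum_le_sum fun u _ => ?_
    exact div_le_div_of_nonneg_left (by positivity) hδR (by exact_mod_cast hδ u)
  have keyR : (∑ u ∈ S, (cout u : ℝ)) = ∑ u ∈ univ.filter (fun u => u ∉ S), (cin u : ℝ) := by
    exact_mod_cast key
  have ha0 : (0:ℝ) ≤ ∑ u ∈ S, (cout u : ℝ) :=
    Finset.sum_nonneg fun u _ => by positivity
  have hstep : (∑ u ∈ S, (cout u : ℝ)) / (δ:ℝ) ≤ r * ((∑ u ∈ S, (cout u : ℝ)) / (Δ:ℝ)) := by
    have h1 := mul_le_mul_of_nonneg_right hr (div_nonneg ha0 hΔR.le)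
    have h2 : (Δ:ℝ)/(δ:ℝ) * ((∑ u ∈ S, (cout u : ℝ)) / (Δ:ℝ)) = (∑ u ∈ S, (cout u : ℝ)) / (δ:ℝ) := by
      field_simp
    linarith
  have hmain : (∑ u ∈ univ.filter (fun u => u ∉ S), ∑ v ∈ univ.filter (fun v => Adj u v ∧ v ∈ S), 1 / (outdeg u : ℝ))
      ≤ r * (∑ u ∈ S, ∑ v ∈ univ.filter (fun v => Adj u v ∧ v ∉ S), 1 / (outdeg u : ℝ)) := by
    rw [hX, hY]
    calc ∑ u ∈ univ.filter (fun u => u ∉ S), (cin u : ℝ) / (outdeg u : ℝ)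
        ≤ ∑ u ∈ univ.filter (fun u => u ∉ S), (cin u : ℝ) / (δ : ℝ) := hYub
      _ = (∑ u ∈ univ.filter (fun u => u ∉ S), (cin u : ℝ)) / (δ:ℝ) := by
          rw [Finset.sum_div]
      _ = (∑ u ∈ S, (cout u : ℝ)) / (δ:ℝ) := by rw [keyR]
      _ ≤ r * ((∑ u ∈ S, (cout u : ℝ)) / (Δ:ℝ)) := hstep
      _ = r * (∑ u ∈ S, (cout u : ℝ) / (Δ:ℝ)) := by rw [Finset.sum_div]
      _ ≤ r * ∑ u ∈ S, (cout u : ℝ) / (outdeg u : ℝ) :=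
          mul_le_mul_of_nonneg_left hXlb hr0
  rw [hdrift]
  have h1 : (0:ℝ) < W * N := by
    apply mul_pos hWpos
    exact_mod_cast hNpos
  apply mul_nonneg (le_of_lt (by rw [one_div]; exact inv_pos.mpr h1))
  linarith
end

section
/- If a strongly connected directed graph G on N vertices is balanced, i.e., (1/indeg(v))·Σ_{(u,v)∈E} 1/outdeg(u) = (1/outdeg(v))·Σ_{(v,w)∈E} 1/indeg(w) for every v, then the neutral fixation probability of a single mutant at vertex u equals (1/indeg(u)) / Σ_{v∈V} (1/indeg(v)), and in particular is at least 1/N². -/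
/-!
Balance turns the fixation equations into a mean-value property: `z v = x v · indeg v` equals the
average of `z` over the out-neighbours of `v`, weighted by `1 / indeg`. By the maximum principle
and strong connectivity `z` is constant, so `x` is proportional to `1 / indeg`, and the
normalisation `Σ x = 1` fixes the constant. Since `1 ≤ indeg ≤ N`, the result is at least
`(1 / N) / N`.
-/

open Finset

section StronglyConnected

variable {V : Type*} [Fintype V] {Adj : V → V → Prop}

theorem exists_adj_of_forall_transGen (hconn : ∀ u v : V, u ≠ v → Relation.TransGen Adj u v)
    (hV : 1 < Fintype.card V) (v : V) : ∃ w, Adj v w := by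
  obtain ⟨u, hu⟩ := Fintype.exists_ne_of_one_lt_card hV v
  obtain ⟨w, hw, -⟩ := Relation.TransGen.head'_iff.mp (hconn v u hu.symm)
  exact ⟨w, hw⟩

theorem exists_adj_to_of_forall_transGen (hconn : ∀ u v : V, u ≠ v → Relation.TransGen Adj u v)
    (hV : 1 < Fintype.card V) (v : V) : ∃ u, Adj u v := by
  obtain ⟨u, hu⟩ := Fintype.exists_ne_of_one_lt_card hV v
  obtain ⟨w, -, hw⟩ := Relation.TransGen.tail'_iff.mp (hconn u v hu)
  exact ⟨w, hw⟩

end StronglyConnected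

theorem forall_eq_of_mean_eq_of_le {ι : Type*} {s : Finset ι} {c z : ι → ℝ} {M : ℝ}
    (hc : ∀ i ∈ s, 0 < c i) (hz : ∀ i ∈ s, z i ≤ M)
    (hmean : M * ∑ i ∈ s, c i = ∑ i ∈ s, c i * z i) : ∀ i ∈ s, z i = M := by
  rw [mul_sum] at hmean
  have hle : ∀ i ∈ s, c i * z i ≤ M * c i := fun i hi => by
    rw [mul_comm M]; exact mul_le_mul_of_nonneg_left (hz i hi) (hc i hi).le
  intro i hi
  have h := (sum_eq_sum_iff_of_le hle).mp hmean.symm i hi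
  rw [mul_comm M] at h
  exact mul_left_cancel₀ (hc i hi).ne' h

section MaximumPrinciple

variable {V : Type*} [Fintype V] {Adj : V → V → Prop} [DecidableRel Adj]

theorem eq_of_forall_mean_eq (hconn : ∀ u v : V, u ≠ v → Relation.TransGen Adj u v)
    (c : V → V → ℝ) (hc : ∀ v w, Adj v w → 0 < c v w) (z : V → ℝ)
    (hmean : ∀ v, z v * ∑ w ∈ univ.filter (fun w => Adj v w), c v w =
      ∑ w ∈ univ.filter (fun w => Adj v w), c v w * z w)
    (u v : V) : z u = z v := by
  obtain ⟨m, -, hm⟩ := exists_max_image univ z ⟨u, mem_univ u⟩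
  have hstep : ∀ v w, z v = z m → Adj v w → z w = z m := fun v w hv hvw => by
    refine forall_eq_of_mean_eq_of_le (fun w hw => hc v w (mem_filter.mp hw).2)
      (fun w _ => hm w (mem_univ w)) ?_ w (mem_filter.mpr ⟨mem_univ w, hvw⟩)
    rw [← hv, hmean]
  have hreach : ∀ w, Relation.TransGen Adj m w → z w = z m := fun w h => by
    induction h with
    | single h => exact hstep m _ rfl h
    | tail _ h ih => exact hstep _ _ ih h
  have hmax : ∀ w, z w = z m := fun w => by
    rcases eq_or_ne m w with rfl | hne
    · rfl
    · exact hreach w (hconn m w hne)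
  rw [hmax u, hmax v]

end MaximumPrinciple

section Normalization

variable {V : Type*} [Fintype V]

theorem eq_div_sum_of_mul_eq_const {d x : V → ℝ} {C : ℝ} (hd : ∀ v, d v ≠ 0)
    (hC : ∀ v, x v * d v = C) (hsum : ∑ v, x v = 1) (u : V) :
    x u = (1 / d u) / ∑ v, 1 / d v := by
  have hx : ∀ v, x v = C * (1 / d v) := fun v => by
    rw [← hC v]; field_simp [hd v]
  have hCS : C * ∑ v, 1 / d v = 1 := by
    rw [mul_sum, ← sum_congr rfl fun v _ => hx v, hsum]
  rw [hx u, eq_one_div_of_mul_eq_one_left hCS]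
  ring

theorem one_div_card_sq_le_div_sum {d : V → ℕ} (hpos : ∀ v, 0 < d v)
    (hle : ∀ v, d v ≤ Fintype.card V) (u : V) :
    1 / (Fintype.card V : ℝ) ^ 2 ≤ (1 / (d u : ℝ)) / ∑ v, 1 / (d v : ℝ) := by
  have hdR : ∀ v, (0 : ℝ) < d v := fun v => by exact_mod_cast hpos v
  have hleR : ∀ v, (d v : ℝ) ≤ Fintype.card V := fun v => by exact_mod_cast hle v
  have hsum_le : ∑ v, 1 / (d v : ℝ) ≤ Fintype.card V := by
    calc ∑ v, 1 / (d v : ℝ) ≤ ∑ _v : V, (1 : ℝ) :=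
          sum_le_sum fun v _ => (div_le_one (hdR v)).mpr (by exact_mod_cast hpos v)
      _ = Fintype.card V := by simp
  have hsum_pos : 0 < ∑ v, 1 / (d v : ℝ) :=
    sum_pos (fun v _ => one_div_pos.mpr (hdR v)) ⟨u, mem_univ u⟩
  calc 1 / (Fintype.card V : ℝ) ^ 2 = (1 / (Fintype.card V : ℝ)) / Fintype.card V := by
        rw [div_div, sq]
    _ ≤ (1 / (d u : ℝ)) / ∑ v, 1 / (d v : ℝ) :=
        div_le_div₀ (by positivity) (one_div_le_one_div_of_le (hdR u) (hleR u)) hsum_pos hsum_le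

end Normalization

section Balanced

variable {V : Type*} [Fintype V] {Adj : V → V → Prop} [DecidableRel Adj]

theorem mean_eq_of_balanced {i o x : V → ℝ} (hi : ∀ v, i v ≠ 0) (ho : ∀ v, o v ≠ 0)
    (hbal : ∀ v, (1 / i v) * ∑ u ∈ univ.filter (fun u => Adj u v), 1 / o u =
      (1 / o v) * ∑ w ∈ univ.filter (fun w => Adj v w), 1 / i w)
    (hx : ∀ v, x v * (∑ u ∈ univ.filter (fun u => Adj u v), 1 / o u) =
      (1 / o v) * ∑ w ∈ univ.filter (fun w => Adj v w), x w)
    (v : V) :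
    x v * i v * ∑ w ∈ univ.filter (fun w => Adj v w), 1 / i w =
      ∑ w ∈ univ.filter (fun w => Adj v w), 1 / i w * (x w * i w) := by
  have hio : i v * ∑ w ∈ univ.filter (fun w => Adj v w), 1 / i w =
      o v * ∑ u ∈ univ.filter (fun u => Adj u v), 1 / o u := by
    have h := hbal v
    field_simp [hi v, ho v] at h
    linarith
  calc x v * i v * ∑ w ∈ univ.filter (fun w => Adj v w), 1 / i w
      = o v * (x v * ∑ u ∈ univ.filter (fun u => Adj u v), 1 / o u) := by
        rw [mul_assoc, hio]; ring
    _ = ∑ w ∈ univ.filter (fun w => Adj v w), x w := by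
        rw [hx v, ← mul_assoc, mul_one_div_cancel (ho v), one_mul]
    _ = ∑ w ∈ univ.filter (fun w => Adj v w), 1 / i w * (x w * i w) :=
        sum_congr rfl fun w _ => by field_simp [hi w]

end Balanced

theorem balanced_graph_neutral_fixation_general
    {V : Type*} [Fintype V]
    (Adj : V → V → Prop) [DecidableRel Adj]
    (hconn : ∀ u v : V, u ≠ v → Relation.TransGen Adj u v)
    (N : ℕ) (hN : N = Fintype.card V) (hN2 : 2 ≤ N)
    (indeg outdeg : V → ℕ)
    (hindeg : ∀ v, indeg v = (univ.filter (fun u => Adj u v)).card)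
    (houtdeg : ∀ v, outdeg v = (univ.filter (fun w => Adj v w)).card)
    (hbal : ∀ v, (1 / (indeg v : ℝ)) * ∑ u ∈ univ.filter (fun u => Adj u v), 1 / (outdeg u : ℝ) =
      (1 / (outdeg v : ℝ)) * ∑ w ∈ univ.filter (fun w => Adj v w), 1 / (indeg w : ℝ))
    (x : V → ℝ)
    (hx : ∀ v, x v * (∑ u ∈ univ.filter (fun u => Adj u v), 1 / (outdeg u : ℝ)) =
      (1 / (outdeg v : ℝ)) * ∑ w ∈ univ.filter (fun w => Adj v w), x w)
    (hxsum : ∑ v, x v = 1) :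
    ∀ u, x u = (1 / (indeg u : ℝ)) / (∑ v, 1 / (indeg v : ℝ)) ∧ 1 / (N : ℝ) ^ 2 ≤ x u := by
  subst hN
  have hindeg_pos : ∀ v, 0 < indeg v := fun v => by
    obtain ⟨u, hu⟩ := exists_adj_to_of_forall_transGen hconn hN2 v
    rw [hindeg]; exact card_pos.mpr ⟨u, mem_filter.mpr ⟨mem_univ u, hu⟩⟩
  have houtdeg_pos : ∀ v, 0 < outdeg v := fun v => by
    obtain ⟨w, hw⟩ := exists_adj_of_forall_transGen hconn hN2 v
    rw [houtdeg]; exact card_pos.mpr ⟨w, mem_filter.mpr ⟨mem_univ w, hw⟩⟩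
  have hi : ∀ v, (indeg v : ℝ) ≠ 0 := fun v => by exact_mod_cast (hindeg_pos v).ne'
  have ho : ∀ v, (outdeg v : ℝ) ≠ 0 := fun v => by exact_mod_cast (houtdeg_pos v).ne'
  have hconst := eq_of_forall_mean_eq hconn (fun _ w => 1 / (indeg w : ℝ))
    (fun _ w _ => one_div_pos.mpr (by exact_mod_cast hindeg_pos w)) (fun v => x v * indeg v)
    (mean_eq_of_balanced hi ho hbal hx)
  intro u
  have hxu := eq_div_sum_of_mul_eq_const hi (fun v => hconst v u) hxsum u
  refine ⟨hxu, hxu ▸ one_div_card_sq_le_div_sum hindeg_pos (fun v => ?_) u⟩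
  rw [hindeg]; exact card_filter_le _ _

/-- **Neutral fixation probabilities on balanced graphs.**
Let `G` be a strongly connected directed graph on `N ≥ 2` vertices that is
balanced, i.e. `(1/indeg(v))·Σ_{u → v} 1/outdeg(u) = (1/outdeg(v))·Σ_{v → w} 1/indeg(w)`
for every `v`. Then the neutral (`r = 1`) single-mutant fixation probabilities
— the unique solution `x` of the system
`x_v·Σ_{u → v} 1/outdeg(u) = (1/outdeg(v))·Σ_{v → w} x_w` with `Σ_v x_v = 1` —
are given by `x_u = (1/indeg(u)) / Σ_v (1/indeg(v))`, and in particular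
`x_u ≥ 1/N²` for every vertex `u`. -/
theorem balanced_graph_neutral_fixation
    {V : Type*} [Fintype V] [DecidableEq V]
    (Adj : V → V → Prop) [DecidableRel Adj]
    (hirr : ∀ v, ¬ Adj v v)
    (hconn : ∀ u v : V, u ≠ v → Relation.TransGen Adj u v)
    (N : ℕ) (hN : N = Fintype.card V) (hN2 : 2 ≤ N)
    (indeg outdeg : V → ℕ)
    (hindeg : ∀ v, indeg v = (univ.filter (fun u => Adj u v)).card)
    (houtdeg : ∀ v, outdeg v = (univ.filter (fun w => Adj v w)).card)
    (hbal : ∀ v, (1 / (indeg v : ℝ)) * ∑ u ∈ univ.filter (fun u => Adj u v), 1 / (outdeg u : ℝ) =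
      (1 / (outdeg v : ℝ)) * ∑ w ∈ univ.filter (fun w => Adj v w), 1 / (indeg w : ℝ))
    (x : V → ℝ)
    (hx : ∀ v, x v * (∑ u ∈ univ.filter (fun u => Adj u v), 1 / (outdeg u : ℝ)) =
      (1 / (outdeg v : ℝ)) * ∑ w ∈ univ.filter (fun w => Adj v w), x w)
    (hxsum : ∑ v, x v = 1) :
    ∀ u, x u = (1 / (indeg u : ℝ)) / (∑ v, 1 / (indeg v : ℝ)) ∧ 1 / (N : ℝ) ^ 2 ≤ x u :=
  balanced_graph_neutral_fixation_general Adj hconn N hN hN2 indeg outdeg hindeg houtdeg hbal x hx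
    hxsum
end

section
/- Let G be a carousel: V is partitioned into sets S_1, …, S_ℓ (indices mod ℓ) with (u,v) ∈ E iff u ∈ S_i and v ∈ S_{i+1} for some i. Then the assignment x_v = 1/|S_{i−1}| for v ∈ S_i (up to normalization) solves the neutral fixation system x_v·Σ_{(u,v)∈E} 1/outdeg(u) = (1/outdeg(v))·Σ_{(v,w)∈E} x_w; hence the neutral fixation probability from v ∈ S_i is proportional to 1/|S_{i−1}|. -/
open Finset

/-- **Neutral fixation probabilities on carousels.**
Let `G` be a carousel: the vertex set is partitioned into nonempty parts
`S_0, …, S_{ℓ−1}` (indices mod `ℓ`, here `parts : ZMod ℓ → Finset V` with part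
index `idx`), and `(u,v)` is an edge iff `u ∈ S_i` and `v ∈ S_{i+1}` for some `i`.
Then the assignment `x_v = 1/|S_{idx(v)−1}|`, normalized to sum to `1`, solves
the neutral fixation system
`x_v·Σ_{u → v} 1/outdeg(u) = (1/outdeg(v))·Σ_{v → w} x_w`;
hence the neutral fixation probability from `v ∈ S_i` is proportional to
`1/|S_{i−1}|`. -/
theorem carousel_neutral_fixation
    {V : Type*} [Fintype V] [DecidableEq V]
    (ℓ : ℕ) [NeZero ℓ]
    (parts : ZMod ℓ → Finset V) (hne : ∀ i, (parts i).Nonempty)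
    (idx : V → ZMod ℓ) (hidx : ∀ v, v ∈ parts (idx v))
    (hpart : ∀ v i, v ∈ parts i → i = idx v)
    (Adj : V → V → Prop) [DecidableRel Adj]
    (hAdj : ∀ u v, Adj u v ↔ idx v = idx u + 1)
    (outdeg : V → ℕ) (houtdeg : ∀ v, outdeg v = (univ.filter (fun w => Adj v w)).card)
    (Z : ℝ) (hZ : Z = ∑ v, 1 / ((parts (idx v - 1)).card : ℝ)) :
    (∀ v, ((1 / ((parts (idx v - 1)).card : ℝ)) / Z) *
          (∑ u ∈ univ.filter (fun u => Adj u v), 1 / (outdeg u : ℝ)) =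
        (1 / (outdeg v : ℝ)) *
          ∑ w ∈ univ.filter (fun w => Adj v w), (1 / ((parts (idx w - 1)).card : ℝ)) / Z) ∧
      (∑ v, (1 / ((parts (idx v - 1)).card : ℝ)) / Z = 1) := by
  classical
  have hcard : ∀ i : ZMod ℓ, (0:ℝ) < ((parts i).card : ℝ) := fun i =>
    Nat.cast_pos.mpr (hne i).card_pos
  have hfilter : ∀ i : ZMod ℓ, univ.filter (fun w => idx w = i) = parts i := by
    intro i
    ext w
    simp only [mem_filter, mem_univ, true_and]
    constructor
    · rintro rfl; exact hidx w
    · intro h; exact (hpart w i h).symm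
  have hpred : ∀ v, univ.filter (fun u => Adj u v) = parts (idx v - 1) := by
    intro v
    rw [← hfilter (idx v - 1)]
    apply filter_congr
    intro u _
    simp only [hAdj, eq_sub_iff_add_eq, eq_comm]
  have hsucc : ∀ v, univ.filter (fun w => Adj v w) = parts (idx v + 1) := by
    intro v
    rw [← hfilter (idx v + 1)]
    apply filter_congr
    intro w _
    simp [hAdj]
  have hout : ∀ u, outdeg u = (parts (idx u + 1)).card := by
    intro u
    rw [houtdeg u, hsucc u]
  have hVne : Nonempty V := ⟨(hne 0).choose⟩
  have hZpos : 0 < Z := by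
    rw [hZ]
    exact Finset.sum_pos (fun v _ => by positivity) univ_nonempty
  constructor
  · intro v
    have hL : ∑ u ∈ univ.filter (fun u => Adj u v), 1 / (outdeg u : ℝ)
        = ((parts (idx v - 1)).card : ℝ) * (1 / ((parts (idx v)).card : ℝ)) := by
      rw [hpred v]
      rw [Finset.sum_congr rfl (fun u hu => by
        have : idx u = idx v - 1 := (hpart u _ hu).symm
        rw [hout u, this, sub_add_cancel])]
      rw [Finset.sum_const, nsmul_eq_mul]
    have hR : ∑ w ∈ univ.filter (fun w => Adj v w), (1 / ((parts (idx w - 1)).card : ℝ)) / Z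
        = ((parts (idx v + 1)).card : ℝ) * ((1 / ((parts (idx v)).card : ℝ)) / Z) := by
      rw [hsucc v]
      rw [Finset.sum_congr rfl (fun w hw => by
        have : idx w = idx v + 1 := (hpart w _ hw).symm
        rw [this, add_sub_cancel_right])]
      rw [Finset.sum_const, nsmul_eq_mul]
    rw [hL, hR, hout v]
    have h1 := (hcard (idx v - 1)).ne'
    have h2 := (hcard (idx v)).ne'
    have h3 := (hcard (idx v + 1)).ne'
    field_simp
  · rw [← Finset.sum_div, ← hZ, div_self hZpos.ne']
end
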